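/- Let μ ∈ ℂ with Re μ > 0, |λ| < 1, and z₀ ∈ D \ {0}. Then the map a ↦ log H_{a,λ}(z₀) is a non-constant analytic function of a on D; consequently it is an open mapping and the set {log H_{a,λ}(z₀) : |a| < 1} is an open subset of ℂ contained in V(z₀, λ). -/

import Mathlib

open Complex Set Metric

noncomputable section

/-- The open unit disk in `ℂ`. -/
def unitDisk : Set ℂ := Metric.ball (0 : ℂ) 1

/-- `P_f(z) = (2π/μ)·(z f'(z)/f(z)) + (1+z)/(1−z)`. -/
def Pfun (μ : ℂ) (f : ℂ → ℂ) (z : ℂ) : ℂ :=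
  2 * (Real.pi : ℂ) / μ * (z * deriv f z / f z) + (1 + z) / (1 - z)

/-- Membership in the class `F_μ`: analytic, non-vanishing on the disk, `f(0) = 1`,
and `Re P_f > 0` on the disk. -/
def memF (μ : ℂ) (f : ℂ → ℂ) : Prop :=
  AnalyticOnNhd ℂ f unitDisk ∧ (∀ z ∈ unitDisk, f z ≠ 0) ∧ f 0 = 1 ∧
    ∀ z ∈ unitDisk, 0 < (Pfun μ f z).re

/-- Membership in the class `F_μ(λ)`: `f ∈ F_μ` with `f'(0) = (μ/π)(λ − 1)`. -/
def memFlam (μ lam : ℂ) (f : ℂ → ℂ) : Prop :=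
  memF μ f ∧ deriv f 0 = μ / (Real.pi : ℂ) * (lam - 1)

/-- The branch of `log f` vanishing at `0`: `log f(z) = ∫₀^z f'(ζ)/f(ζ) dζ`
(integral over the segment from `0` to `z`). -/
def logf (f : ℂ → ℂ) (z : ℂ) : ℂ :=
  ∫ t in (0:ℝ)..1, deriv f (t * z) / f (t * z) * z

/-- The region of variability `V(z₀, λ) = {log f(z₀) : f ∈ F_μ(λ)}`. -/
def Vset (μ lam z₀ : ℂ) : Set ℂ := {w | ∃ f, memFlam μ lam f ∧ w = logf f z₀}

/-- `δ(w, λ) = (w + λ)/(1 + conj(λ) w)`. -/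
def dl (lam w : ℂ) : ℂ := (w + lam) / (1 + (starRingEnd ℂ) lam * w)

/-- `log H_{a,λ}(z) = (μ/π)·∫₀^z (δ(aζ,λ) − 1)/((1 − δ(aζ,λ)ζ)(1 − ζ)) dζ`
(integral over the segment from `0` to `z`). -/
def Hlog (μ lam a z : ℂ) : ℂ :=
  μ / (Real.pi : ℂ) *
    ∫ t in (0:ℝ)..1,
      (dl lam (a * (t * z)) - 1) /
        ((1 - dl lam (a * (t * z)) * (t * z)) * (1 - t * z)) * z

/-- The function `H_{a,λ}(z) = exp(log H_{a,λ}(z))`. -/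
def Hfun (μ lam a z : ℂ) : ℂ := Complex.exp (Hlog μ lam a z)

/-- `c(z, λ)`. -/
def cfun (z lam : ℂ) : ℂ :=
  ((‖z‖ : ℂ) ^ 2 * ((starRingEnd ℂ) z - lam) * (1 - (starRingEnd ℂ) lam)
      - (1 - lam) * (1 - (starRingEnd ℂ) lam * (starRingEnd ℂ) z)) /
    ((1 - z) * (1 - (‖z‖ : ℂ) ^ 2)
      * (1 + (‖z‖ : ℂ) ^ 2 - 2 * ((lam * z).re : ℂ)))

/-- `r(z, λ)`. -/
def rfun (z lam : ℂ) : ℝ :=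
  (1 - ‖lam‖ ^ 2) * ‖z‖ /
    ((1 - ‖z‖ ^ 2) * (1 + ‖z‖ ^ 2 - 2 * (lam * z).re))

/-- A starlike univalent function on the unit disk: analytic, `φ(0) = 0`, `φ'(0) = 1`,
univalent, and `Re(z φ'(z)/φ(z)) > 0` on the disk. -/
def IsStarlike (φ : ℂ → ℂ) : Prop :=
  AnalyticOnNhd ℂ φ unitDisk ∧ φ 0 = 0 ∧ deriv φ 0 = 1 ∧
    Set.InjOn φ unitDisk ∧
    ∀ z ∈ unitDisk, z ≠ 0 → 0 < (z * deriv φ z / φ z).re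

/-- `G(z) = (μ/π)·∫₀^z e^{iθ}ζ/(1 + (conj(λ)e^{iθ} − λ)ζ − e^{iθ}ζ²)² dζ`
(integral over the segment from `0` to `z`). -/
def Gfun (μ lam : ℂ) (θ : ℝ) (z : ℂ) : ℂ :=
  μ / (Real.pi : ℂ) *
    ∫ t in (0:ℝ)..1,
      Complex.exp (θ * Complex.I) * (t * z) /
        (1 + ((starRingEnd ℂ) lam * Complex.exp (θ * Complex.I) - lam) * (t * z)
          - Complex.exp (θ * Complex.I) * (t * z) ^ 2) ^ 2 * z

end

/-!
Differentiating under the integral sign shows that `a ↦ log H_{a,λ}(z₀)` is holomorphic on the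
disk. Its derivative at `a = 0` is `(μ/π)(1 - |λ|²) z₀² ∫₀¹ t/(1 - λz₀t)² dt`, which does not
vanish because `(1 - b) t/(1 - bt)²` has positive real part for `|b| < 1` and `0 < t < 1`; so the
map is not constant and the open mapping theorem applies. Finally, `log H_{a,λ}` is a primitive of
`(μ/π)(δ(aζ,λ) - 1)/((1 - δ(aζ,λ)ζ)(1 - ζ))`, hence `P_H(z) = (1 + ωz)/(1 - ωz)` with
`ω = δ(az,λ)` in the disk, so `Re P_H > 0` and `H_{a,λ} ∈ F_μ(λ)`.
-/

open Filter MeasureTheory intervalIntegral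
open scoped Topology Interval ComplexConjugate

section NormLtOne

variable {R : Type*} [SeminormedRing R] {x y : R}

lemma norm_mul_lt_one (hx : ‖x‖ < 1) (hy : ‖y‖ < 1) : ‖x * y‖ < 1 :=
  (norm_mul_le x y).trans_lt (mul_lt_one_of_nonneg_of_lt_one_left (norm_nonneg x) hx hy.le)

lemma one_sub_ne_zero_of_norm_lt_one [NormOneClass R] (hx : ‖x‖ < 1) : 1 - x ≠ 0 :=
  sub_ne_zero.2 fun h => by simp [← h] at hx

lemma one_add_ne_zero_of_norm_lt_one [NormOneClass R] (hx : ‖x‖ < 1) : 1 + x ≠ 0 := by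
  simpa using one_sub_ne_zero_of_norm_lt_one (x := -x) (by simpa using hx)

end NormLtOne

lemma re_one_add_div_one_sub_pos {w : ℂ} (hw : ‖w‖ < 1) : 0 < ((1 + w) / (1 - w)).re := by
  have hw2 : w.re ^ 2 + w.im ^ 2 < 1 := by
    rw [← sq_lt_one_iff₀ (norm_nonneg w), Complex.sq_norm, normSq_apply] at hw
    linarith
  rw [div_re, ← add_div]
  refine div_pos ?_ (normSq_pos.2 (one_sub_ne_zero_of_norm_lt_one hw))
  simp only [add_re, add_im, sub_re, sub_im, one_re, one_im]
  nlinarith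

theorem hasDerivAt_intervalIntegral_of_continuousOn {𝕜 E : Type*} [RCLike 𝕜]
    [NormedAddCommGroup E] [NormedSpace ℝ E] [NormedSpace 𝕜 E]
    {F F' : 𝕜 → ℝ → E} {U : Set 𝕜} {x₀ : 𝕜} {a b : ℝ} (hU : U ∈ 𝓝 x₀)
    (hF : ∀ x ∈ U, ContinuousOn (F x) [[a, b]])
    (hF' : ContinuousOn (Function.uncurry F') (U ×ˢ [[a, b]]))
    (h_diff : ∀ x ∈ U, ∀ t ∈ [[a, b]], HasDerivAt (F · t) (F' x t) x) :
    HasDerivAt (fun x => ∫ t in a..b, F x t) (∫ t in a..b, F' x₀ t) x₀ := by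
  obtain ⟨r, hr, hrU⟩ := nhds_basis_closedBall.mem_iff.mp hU
  obtain ⟨C, hC⟩ := ((isCompact_closedBall x₀ r).prod isCompact_uIcc).exists_bound_of_continuousOn
    (hF'.mono (prod_mono hrU subset_rfl))
  have hx₀ : x₀ ∈ U := mem_of_mem_nhds hU
  have hF'x₀ : ContinuousOn (F' x₀) [[a, b]] :=
    hF'.comp (Continuous.prodMk_right x₀).continuousOn fun t ht => ⟨hx₀, ht⟩
  refine (hasDerivAt_integral_of_dominated_loc_of_deriv_le (bound := fun _ => C)
    (closedBall_mem_nhds x₀ hr) ?_ ((hF x₀ hx₀).intervalIntegrable)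
    ((hF'x₀.mono uIoc_subset_uIcc).aestronglyMeasurable measurableSet_uIoc) ?_
    intervalIntegrable_const ?_).2
  · filter_upwards [hU] with x hx
    exact ((hF x hx).mono uIoc_subset_uIcc).aestronglyMeasurable measurableSet_uIoc
  · exact .of_forall fun t ht x hx => hC (x, t) ⟨hx, uIoc_subset_uIcc ht⟩
  · exact .of_forall fun t ht x hx => h_diff x (hrU hx) t (uIoc_subset_uIcc ht)

lemma intervalIntegral_ne_zero_of_re_pos {f : ℝ → ℂ} {a b : ℝ} (hab : a < b)
    (hf : ContinuousOn f [[a, b]]) (hpos : ∀ t ∈ Ioo a b, 0 < (f t).re) :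
    ∫ t in a..b, f t ≠ 0 := by
  intro h0
  have h : 0 < ∫ t in a..b, (f t).re :=
    intervalIntegral_pos_of_pos_on (continuous_re.comp_continuousOn hf).intervalIntegrable hpos hab
  rw [show ∫ t in a..b, (f t).re = (∫ t in a..b, f t).re from
    intervalIntegral_re hf.intervalIntegrable, h0, zero_re] at h
  exact lt_irrefl 0 h

noncomputable def segmentIntegral (f : ℂ → ℂ) (z : ℂ) : ℂ :=
  ∫ t in (0:ℝ)..1, f (t * z) * z

lemma ofReal_mul_mem_ball_zero {r t : ℝ} {z : ℂ} (hz : z ∈ ball (0 : ℂ) r)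
    (ht : t ∈ [[(0:ℝ), 1]]) : (t : ℂ) * z ∈ ball (0 : ℂ) r := by
  rw [uIcc_of_le zero_le_one] at ht
  simpa [Complex.real_smul] using
    (convex_ball (0 : ℂ) r).smul_mem_of_zero_mem (mem_ball_self (pos_of_mem_ball hz)) hz ht

-- Morera: `f` has a primitive `G` on the disk, and the segment integral is `G z - G 0`.
theorem hasDerivAt_segmentIntegral {f : ℂ → ℂ} {r : ℝ} (hf : DifferentiableOn ℂ f (ball 0 r))
    {z : ℂ} (hz : z ∈ ball 0 r) : HasDerivAt (segmentIntegral f) (f z) z := by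
  obtain ⟨G, hG⟩ := hf.isExactOn_ball
  have hprim : ∀ w ∈ ball (0 : ℂ) r, segmentIntegral f w = G w - G 0 := by
    intro w hw
    unfold segmentIntegral
    have hderiv : ∀ t ∈ [[(0:ℝ), 1]],
        HasDerivAt (fun t : ℝ => G (t * w)) (f (t * w) * w) t := by
      intro t ht
      refine HasDerivAt.comp_ofReal (e := fun u => G (u * w)) ?_
      exact (hG _ (ofReal_mul_mem_ball_zero hw ht)).comp (t : ℂ) (hasDerivAt_mul_const w)
    have hcont : ContinuousOn (fun t : ℝ => f (t * w) * w) [[(0:ℝ), 1]] :=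
      (hf.continuousOn.comp (by fun_prop) fun t ht => ofReal_mul_mem_ball_zero hw ht).mul
        continuousOn_const
    simpa using integral_eq_sub_of_hasDerivAt hderiv hcont.intervalIntegrable
  refine ((hG z hz).sub_const (G 0)).congr_of_eventuallyEq ?_
  filter_upwards [isOpen_ball.mem_nhds hz] with w hw using hprim w hw

section Mobius

variable {lam w : ℂ}

lemma normSq_one_add_conj_mul (lam w : ℂ) :
    normSq (1 + conj lam * w) = normSq (w + lam) + (1 - normSq lam) * (1 - normSq w) := by
  simp only [normSq_apply, add_re, add_im, mul_re, mul_im, one_re, one_im, conj_re, conj_im]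
  ring

lemma one_add_conj_mul_ne_zero (hlam : ‖lam‖ < 1) (hw : ‖w‖ < 1) : 1 + conj lam * w ≠ 0 :=
  one_add_ne_zero_of_norm_lt_one (norm_mul_lt_one (by simpa using hlam) hw)

lemma norm_dl_lt_one (hlam : ‖lam‖ < 1) (hw : ‖w‖ < 1) : ‖dl lam w‖ < 1 := by
  have hden := one_add_conj_mul_ne_zero hlam hw
  rw [dl, norm_div, div_lt_one (norm_pos_iff.2 hden), ← sq_lt_sq₀ (norm_nonneg _) (norm_nonneg _),
    Complex.sq_norm, Complex.sq_norm, normSq_one_add_conj_mul, lt_add_iff_pos_right]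
  have hlam' : normSq lam < 1 := by simpa [← Complex.sq_norm] using hlam
  have hw' : normSq w < 1 := by simpa [← Complex.sq_norm] using hw
  exact mul_pos (by linarith) (by linarith)

noncomputable def dlDeriv (lam w : ℂ) : ℂ := (1 - conj lam * lam) / (1 + conj lam * w) ^ 2

lemma hasDerivAt_dl (hden : 1 + conj lam * w ≠ 0) : HasDerivAt (dl lam) (dlDeriv lam w) w := by
  refine (((hasDerivAt_id' w).add_const lam).fun_div
    (((hasDerivAt_id' w).const_mul (conj lam)).const_add 1) hden).congr_deriv ?_
  rw [dlDeriv]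
  ring

end Mobius

section Kernel

noncomputable def logHKernel (lam a ζ : ℂ) : ℂ :=
  (dl lam (a * ζ) - 1) / ((1 - dl lam (a * ζ) * ζ) * (1 - ζ))

-- `∂/∂u [(u - 1)/((1 - uζ)(1 - ζ))] = 1/(1 - uζ)²`, composed with `a ↦ δ(aζ, λ)`.
noncomputable def logHKernelParamDeriv (lam a ζ : ℂ) : ℂ :=
  dlDeriv lam (a * ζ) * ζ / (1 - dl lam (a * ζ) * ζ) ^ 2

lemma Hlog_eq_segmentIntegral (μ lam a z : ℂ) :
    Hlog μ lam a z = μ / (Real.pi : ℂ) * segmentIntegral (logHKernel lam a) z := rfl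

lemma logHKernel_zero (lam a : ℂ) : logHKernel lam a 0 = lam - 1 := by
  simp [logHKernel, dl]

lemma logHKernelParamDeriv_zero (lam ζ : ℂ) :
    logHKernelParamDeriv lam 0 ζ = (1 - conj lam * lam) * ζ / (1 - lam * ζ) ^ 2 := by
  simp [logHKernelParamDeriv, dlDeriv, dl]

variable {lam a ζ : ℂ}

lemma one_sub_dl_mul_ne_zero (hlam : ‖lam‖ < 1) (ha : ‖a‖ < 1) (hζ : ‖ζ‖ < 1) :
    1 - dl lam (a * ζ) * ζ ≠ 0 :=
  one_sub_ne_zero_of_norm_lt_one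
    (norm_mul_lt_one (norm_dl_lt_one hlam (norm_mul_lt_one ha hζ)) hζ)

lemma hasDerivAt_logHKernel_param (hlam : ‖lam‖ < 1) (ha : ‖a‖ < 1) (hζ : ‖ζ‖ < 1) :
    HasDerivAt (fun a => logHKernel lam a ζ) (logHKernelParamDeriv lam a ζ) a := by
  have hu : HasDerivAt (fun a => dl lam (a * ζ)) (dlDeriv lam (a * ζ) * ζ) a :=
    HasDerivAt.comp (h₂ := dl lam) a
      (hasDerivAt_dl (one_add_conj_mul_ne_zero hlam (norm_mul_lt_one ha hζ)))
      (hasDerivAt_mul_const ζ)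
  have h1 := one_sub_dl_mul_ne_zero hlam ha hζ
  have h2 := one_sub_ne_zero_of_norm_lt_one hζ
  refine ((hu.sub_const 1).fun_div (((hu.mul_const ζ).const_sub 1).mul_const (1 - ζ))
    (mul_ne_zero h1 h2)).congr_deriv ?_
  rw [logHKernelParamDeriv]
  field_simp
  ring

lemma differentiableAt_logHKernel (hlam : ‖lam‖ < 1) (ha : ‖a‖ < 1) (hζ : ‖ζ‖ < 1) :
    DifferentiableAt ℂ (logHKernel lam a) ζ := by
  have hu : DifferentiableAt ℂ (fun ζ => dl lam (a * ζ)) ζ :=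
    (hasDerivAt_dl (one_add_conj_mul_ne_zero hlam (norm_mul_lt_one ha hζ))).differentiableAt.comp
      ζ (differentiableAt_id.const_mul a)
  have h1 := one_sub_dl_mul_ne_zero hlam ha hζ
  have h2 := one_sub_ne_zero_of_norm_lt_one hζ
  exact (hu.sub_const 1).div (((differentiableAt_const 1).sub (hu.mul differentiableAt_id)).mul
    ((differentiableAt_const 1).sub differentiableAt_id)) (mul_ne_zero h1 h2)

lemma continuousAt_logHKernelParamDeriv (hlam : ‖lam‖ < 1) (ha : ‖a‖ < 1) (hζ : ‖ζ‖ < 1) :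
    ContinuousAt (fun p : ℂ × ℂ => logHKernelParamDeriv lam p.1 p.2) (a, ζ) := by
  have h0 := one_add_conj_mul_ne_zero hlam (norm_mul_lt_one ha hζ)
  have h1 := one_sub_dl_mul_ne_zero hlam ha hζ
  simp only [logHKernelParamDeriv, dlDeriv, dl] at h1 ⊢
  fun_prop (disch := simpa using by assumption)

end Kernel

lemma re_one_sub_mul_div_one_sub_mul_sq_pos {b : ℂ} (hb : ‖b‖ < 1) {t : ℝ} (ht : t ∈ Ioo 0 1) :
    0 < ((1 - b) * (t / (1 - b * t) ^ 2)).re := by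
  obtain ⟨ht0, ht1⟩ := ht
  have hbt : ‖b * t‖ < 1 := norm_mul_lt_one hb (by simpa [abs_of_pos ht0] using ht1)
  have hb2 : b.re ^ 2 + b.im ^ 2 < 1 := by
    rw [← sq_lt_one_iff₀ (norm_nonneg b), Complex.sq_norm, normSq_apply] at hb
    linarith
  have hre : ((1 - b) * t).re * ((1 - b * t) ^ 2).re + ((1 - b) * t).im * ((1 - b * t) ^ 2).im
      = t * ((1 - b.re) * (1 - b.re * t) ^ 2) + b.im ^ 2 * t ^ 2 * (2 - t - b.re * t) := by
    simp only [pow_two, mul_re, mul_im, sub_re, sub_im, one_re, one_im, ofReal_re, ofReal_im]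
    ring
  rw [← mul_div_assoc, div_re, ← add_div, hre]
  refine div_pos ?_ (normSq_pos.2 (pow_ne_zero 2 (one_sub_ne_zero_of_norm_lt_one hbt)))
  have hx1 : b.re < 1 := by nlinarith [sq_nonneg b.im]
  have hx2 : -1 < b.re := by nlinarith [sq_nonneg b.im]
  have h1 : 0 < t * ((1 - b.re) * (1 - b.re * t) ^ 2) :=
    mul_pos ht0 (mul_pos (by linarith) (pow_pos (by nlinarith) 2))
  have h2 : 0 ≤ b.im ^ 2 * t ^ 2 * (2 - t - b.re * t) :=
    mul_nonneg (by positivity) (by nlinarith)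
  linarith

lemma intervalIntegral_ofReal_div_one_sub_mul_sq_ne_zero {b : ℂ} (hb : ‖b‖ < 1) :
    ∫ t in (0:ℝ)..1, (t : ℂ) / (1 - b * t) ^ 2 ≠ 0 := by
  have hcont : ContinuousOn (fun t : ℝ => (1 - b) * ((t : ℂ) / (1 - b * t) ^ 2)) [[0, 1]] := by
    refine fun t ht => ContinuousAt.continuousWithinAt ?_
    have h : 1 - b * t ≠ 0 := by
      rw [mul_comm]
      exact one_sub_ne_zero_of_norm_lt_one
        (mem_ball_zero_iff.1 (ofReal_mul_mem_ball_zero (mem_ball_zero_iff.2 hb) ht))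
    exact (show ContinuousAt (fun w : ℂ => (1 - b) * (w / (1 - b * w) ^ 2)) t by
      fun_prop (disch := exact pow_ne_zero 2 h)).comp continuous_ofReal.continuousAt
  have h := intervalIntegral_ne_zero_of_re_pos zero_lt_one hcont
    fun t ht => re_one_sub_mul_div_one_sub_mul_sq_pos hb ht
  rw [intervalIntegral.integral_const_mul] at h
  exact right_ne_zero_of_mul h

section Hlog

variable {lam a z : ℂ}

lemma integral_logHKernelParamDeriv_zero_ne_zero (hlam : ‖lam‖ < 1) (hz : ‖z‖ < 1)
    (hz0 : z ≠ 0) : ∫ t in (0:ℝ)..1, logHKernelParamDeriv lam 0 (t * z) * z ≠ 0 := by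
  have hconj : 1 - conj lam * lam ≠ 0 :=
    one_sub_ne_zero_of_norm_lt_one (norm_mul_lt_one (by simpa using hlam) hlam)
  simp_rw [logHKernelParamDeriv_zero, show ∀ t : ℝ,
    (1 - conj lam * lam) * (t * z) / (1 - lam * (t * z)) ^ 2 * z
      = (1 - conj lam * lam) * z ^ 2 * (t / (1 - lam * z * t) ^ 2) from fun t => by ring,
    intervalIntegral.integral_const_mul]
  exact mul_ne_zero (mul_ne_zero hconj (pow_ne_zero 2 hz0))
    (intervalIntegral_ofReal_div_one_sub_mul_sq_ne_zero (norm_mul_lt_one hlam hz))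

lemma hasDerivAt_Hlog_param (μ : ℂ) (hlam : ‖lam‖ < 1) (hz : ‖z‖ < 1) (ha : ‖a‖ < 1) :
    HasDerivAt (fun a => Hlog μ lam a z)
      (μ / (Real.pi : ℂ) * ∫ t in (0:ℝ)..1, logHKernelParamDeriv lam a (t * z) * z) a := by
  have hseg : ∀ t ∈ [[(0:ℝ), 1]], ‖(t : ℂ) * z‖ < 1 := fun t ht =>
    mem_ball_zero_iff.1 (ofReal_mul_mem_ball_zero (mem_ball_zero_iff.2 hz) ht)
  show HasDerivAt (fun a => μ / (Real.pi : ℂ) * ∫ t in (0:ℝ)..1, logHKernel lam a (t * z) * z) _ a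
  refine HasDerivAt.const_mul _ (hasDerivAt_intervalIntegral_of_continuousOn
    (F := fun a t => logHKernel lam a (t * z) * z)
    (F' := fun a t => logHKernelParamDeriv lam a (t * z) * z) (U := ball 0 1)
    (isOpen_ball.mem_nhds (mem_ball_zero_iff.2 ha)) ?_ ?_ ?_)
  · intro a ha t ht
    exact ((differentiableAt_logHKernel hlam (mem_ball_zero_iff.1 ha) (hseg t ht)).continuousAt.comp
      (f := fun t : ℝ => (t : ℂ) * z) (by fun_prop)).continuousWithinAt.mul continuousWithinAt_const
  · rintro ⟨a, t⟩ ⟨ha, ht⟩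
    have h := continuousAt_logHKernelParamDeriv hlam (mem_ball_zero_iff.1 ha) (hseg t ht)
    exact ((h.comp (f := fun p : ℂ × ℝ => (p.1, (p.2 : ℂ) * z)) (by fun_prop)).mul
      continuousAt_const).continuousWithinAt
  · intro a ha t ht
    exact (hasDerivAt_logHKernel_param hlam (mem_ball_zero_iff.1 ha) (hseg t ht)).mul_const z

lemma hasDerivAt_Hlog (μ : ℂ) (hlam : ‖lam‖ < 1) (ha : ‖a‖ < 1) (hz : ‖z‖ < 1) :
    HasDerivAt (Hlog μ lam a) (μ / (Real.pi : ℂ) * logHKernel lam a z) z :=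
  (hasDerivAt_segmentIntegral (fun _ hζ =>
    (differentiableAt_logHKernel hlam ha (mem_ball_zero_iff.1 hζ)).differentiableWithinAt)
    (mem_ball_zero_iff.2 hz)).const_mul _

end Hlog

section Hfun

variable {μ lam a z : ℂ}

lemma Hfun_ne_zero (μ lam a z : ℂ) : Hfun μ lam a z ≠ 0 :=
  exp_ne_zero _

lemma Hfun_zero (μ lam a : ℂ) : Hfun μ lam a 0 = 1 := by
  simp [Hfun, Hlog]

lemma hasDerivAt_Hfun (μ : ℂ) (hlam : ‖lam‖ < 1) (ha : ‖a‖ < 1) (hz : ‖z‖ < 1) :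
    HasDerivAt (Hfun μ lam a) (Hfun μ lam a z * (μ / (Real.pi : ℂ) * logHKernel lam a z)) z :=
  (hasDerivAt_Hlog μ hlam ha hz).cexp

lemma deriv_Hfun_div_Hfun (μ : ℂ) (hlam : ‖lam‖ < 1) (ha : ‖a‖ < 1) (hz : ‖z‖ < 1) :
    deriv (Hfun μ lam a) z / Hfun μ lam a z = μ / (Real.pi : ℂ) * logHKernel lam a z := by
  rw [(hasDerivAt_Hfun μ hlam ha hz).deriv, mul_div_cancel_left₀ _ (Hfun_ne_zero μ lam a z)]

lemma Pfun_Hfun (hμ : μ ≠ 0) (hlam : ‖lam‖ < 1) (ha : ‖a‖ < 1) (hz : ‖z‖ < 1) :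
    Pfun μ (Hfun μ lam a) z = (1 + dl lam (a * z) * z) / (1 - dl lam (a * z) * z) := by
  have h1 := one_sub_dl_mul_ne_zero hlam ha hz
  have h2 := one_sub_ne_zero_of_norm_lt_one hz
  have hπ : (Real.pi : ℂ) ≠ 0 := ofReal_ne_zero.2 Real.pi_ne_zero
  rw [Pfun, mul_div_assoc z, deriv_Hfun_div_Hfun μ hlam ha hz, logHKernel]
  generalize dl lam (a * z) = d at h1 ⊢
  rw [mul_comm d] at h1 ⊢
  field_simp
  ring

lemma logf_Hfun (μ : ℂ) (hlam : ‖lam‖ < 1) (ha : ‖a‖ < 1) (hz : ‖z‖ < 1) :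
    logf (Hfun μ lam a) z = Hlog μ lam a z := by
  rw [Hlog_eq_segmentIntegral, segmentIntegral, ← intervalIntegral.integral_const_mul]
  refine intervalIntegral.integral_congr fun t ht => ?_
  rw [deriv_Hfun_div_Hfun μ hlam ha
    (mem_ball_zero_iff.1 (ofReal_mul_mem_ball_zero (mem_ball_zero_iff.2 hz) ht))]
  ring

lemma memFlam_Hfun (hμ : 0 < μ.re) (hlam : ‖lam‖ < 1) (ha : ‖a‖ < 1) :
    memFlam μ lam (Hfun μ lam a) := by
  have hμ0 : μ ≠ 0 := fun h => by simp [h] at hμ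
  refine ⟨⟨?_, fun z _ => Hfun_ne_zero μ lam a z, Hfun_zero μ lam a, fun z hz => ?_⟩, ?_⟩
  · exact DifferentiableOn.analyticOnNhd (fun z hz => (hasDerivAt_Hfun μ hlam ha
      (mem_ball_zero_iff.1 hz)).differentiableAt.differentiableWithinAt) isOpen_ball
  · have hz := mem_ball_zero_iff.1 hz
    rw [Pfun_Hfun hμ0 hlam ha hz]
    exact re_one_add_div_one_sub_pos
      (norm_mul_lt_one (norm_dl_lt_one hlam (norm_mul_lt_one ha hz)) hz)
  · rw [(hasDerivAt_Hfun μ hlam ha (by simp)).deriv, Hfun_zero, logHKernel_zero, one_mul]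

end Hfun

theorem stmt17 (μ lam z₀ : ℂ) (hμ : 0 < μ.re) (hlam : ‖lam‖ < 1)
    (hz₀ : z₀ ∈ unitDisk) (hz₀0 : z₀ ≠ 0) :
    AnalyticOnNhd ℂ (fun a => Hlog μ lam a z₀) unitDisk ∧
    (¬ ∃ c : ℂ, ∀ a ∈ unitDisk, Hlog μ lam a z₀ = c) ∧
    (∀ U : Set ℂ, U ⊆ unitDisk → IsOpen U → IsOpen ((fun a => Hlog μ lam a z₀) '' U)) ∧
    IsOpen ((fun a => Hlog μ lam a z₀) '' unitDisk) ∧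
    (fun a => Hlog μ lam a z₀) '' unitDisk ⊆ Vset μ lam z₀ := by
  have hz₀' : ‖z₀‖ < 1 := mem_ball_zero_iff.1 hz₀
  have hderiv (a : ℂ) (ha : a ∈ unitDisk) :=
    hasDerivAt_Hlog_param μ hlam hz₀' (mem_ball_zero_iff.1 ha)
  have hanalytic : AnalyticOnNhd ℂ (fun a => Hlog μ lam a z₀) unitDisk :=
    DifferentiableOn.analyticOnNhd
      (fun a ha => (hderiv a ha).differentiableAt.differentiableWithinAt) isOpen_ball
  have hnonconst : ¬ ∃ c : ℂ, ∀ a ∈ unitDisk, Hlog μ lam a z₀ = c := by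
    rintro ⟨c, hc⟩
    have h0 : (0 : ℂ) ∈ unitDisk := mem_ball_self one_pos
    have hμπ : μ / (Real.pi : ℂ) ≠ 0 :=
      div_ne_zero (fun h => by simp [h] at hμ) (ofReal_ne_zero.2 Real.pi_ne_zero)
    refine mul_ne_zero hμπ (integral_logHKernelParamDeriv_zero_ne_zero hlam hz₀' hz₀0)
      ((hderiv 0 h0).unique ((hasDerivAt_const (0 : ℂ) c).congr_of_eventuallyEq ?_))
    filter_upwards [isOpen_ball.mem_nhds h0] with a ha using hc a ha
  have hopen :=
    (hanalytic.is_constant_or_isOpen (convex_ball (0 : ℂ) 1).isPreconnected).resolve_left hnonconst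
  refine ⟨hanalytic, hnonconst, hopen, hopen _ subset_rfl isOpen_ball, ?_⟩
  rintro _ ⟨a, ha, rfl⟩
  exact ⟨Hfun μ lam a, memFlam_Hfun hμ hlam (mem_ball_zero_iff.1 ha),
    (logf_Hfun μ hlam (mem_ball_zero_iff.1 ha) hz₀').symm⟩
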